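/- Let $Q_0 \subset \mathbb{R}^n$ be a cube and $f \in L^1(Q_0)$. If $\sup_{Q \subset Q_0} \frac{1}{|Q|}\int_Q \big| f(x) - |f|_Q \big| \, dx =: \|f\|_{\bar{\mathcal{L}}^{1,n}} < \infty$, then $f \in BMO(Q_0)$ with $\sup_{Q \subset Q_0} \frac{1}{|Q|}\int_Q |f(x) - f_Q| \, dx \leq 2 \|f\|_{\bar{\mathcal{L}}^{1,n}}$, and moreover $\|f^-\|_{L^\infty(Q_0)} \leq \frac{1}{2}\|f\|_{\bar{\mathcal{L}}^{1,n}}$. -/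

import Mathlib

/-!
On a cube `Q` write `a = |f|_Q` and `m = f_Q`, and let `N` bound `⨍_Q |f - a|`. Since
`|f| - f = 2 f⁻`, the difference `a - m` is twice the average of `f⁻`; it is also the average of
`a - f`, hence at most `N`. For any constant `b`, `|f - m| ≤ |f - b| + |b - m|` with
`|b - m| ≤ ⨍ |f - b|`, and `b = a` gives the BMO bound. So the averages of `f⁻` over all small
cubes are at most `N / 2`, and Lebesgue's differentiation theorem turns this into an a.e. bound:
cubes are the closed balls of the sup metric on `Fin n → ℝ`, and their boundaries are null.
-/

open MeasureTheory

/-- The axis-parallel cube centered at `x` with side length `2 * ρ`. -/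
def cube (n : ℕ) (x : Fin n → ℝ) (ρ : ℝ) : Set (Fin n → ℝ) := {y | ∀ i, |y i - x i| ≤ ρ}

open Set Metric Filter Topology

section Averages

variable {α : Type*} [MeasurableSpace α] {μ : Measure α} {f : α → ℝ}

theorem integral_abs_sub_integral_le_two_mul [IsProbabilityMeasure μ] (hf : Integrable f μ)
    (b : ℝ) : ∫ x, |f x - ∫ y, f y ∂μ| ∂μ ≤ 2 * ∫ x, |f x - b| ∂μ := by
  set m := ∫ y, f y ∂μ
  have hfb : Integrable (fun x => |f x - b|) μ := (hf.sub (integrable_const b)).abs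
  have hbm : |b - m| ≤ ∫ x, |f x - b| ∂μ := calc
    |b - m| = |∫ x, (b - f x) ∂μ| := by simp [integral_sub (integrable_const b) hf, m]
    _ ≤ ∫ x, |b - f x| ∂μ := by
      simpa only [Real.norm_eq_abs] using norm_integral_le_integral_norm (fun x => b - f x)
    _ = ∫ x, |f x - b| ∂μ := by simp_rw [abs_sub_comm]
  calc ∫ x, |f x - m| ∂μ ≤ ∫ x, (|f x - b| + |b - m|) ∂μ :=
        integral_mono (hf.sub (integrable_const m)).abs (hfb.add (integrable_const _))
          fun x => abs_sub_le _ _ _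
    _ = ∫ x, |f x - b| ∂μ + |b - m| := by simp [integral_add hfb (integrable_const _)]
    _ ≤ 2 * ∫ x, |f x - b| ∂μ := by linarith

theorem two_mul_integral_negPart_le [IsProbabilityMeasure μ] (hf : Integrable f μ) :
    2 * ∫ x, max (-f x) 0 ∂μ ≤ ∫ x, |f x - ∫ y, |f y| ∂μ| ∂μ := calc
  2 * ∫ x, max (-f x) 0 ∂μ = ∫ x, (|f x| - f x) ∂μ := by
      rw [← integral_const_mul]
      congr 1 with x
      rw [abs_sub_eq_two_nsmul_negPart, nsmul_eq_mul, Nat.cast_ofNat]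
      rfl
  _ = ∫ x, ((∫ y, |f y| ∂μ) - f x) ∂μ := by
      simp [integral_sub hf.abs hf, integral_sub (integrable_const _) hf]
  _ ≤ ∫ x, |f x - ∫ y, |f y| ∂μ| ∂μ :=
      integral_mono ((integrable_const _).sub hf) (hf.sub (integrable_const _)).abs
        fun x => (le_abs_self _).trans (abs_sub_comm _ _).le

theorem setAverage_abs_sub_setAverage_le_two_mul {s : Set α} (hs₀ : μ s ≠ 0) (hs : μ s ≠ ⊤)
    (hf : IntegrableOn f s μ) (b : ℝ) :
    ⨍ x in s, |f x - ⨍ y in s, f y ∂μ| ∂μ ≤ 2 * ⨍ x in s, |f x - b| ∂μ := by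
  have : IsFiniteMeasure (μ.restrict s) := isFiniteMeasure_restrict.2 hs
  have : NeZero (μ.restrict s) := ⟨by simpa using hs₀⟩
  simpa only [average_eq'] using integral_abs_sub_integral_le_two_mul
    (hf.smul_measure (by simpa using hs₀)) b

theorem two_mul_setAverage_negPart_le {s : Set α} (hs₀ : μ s ≠ 0) (hs : μ s ≠ ⊤)
    (hf : IntegrableOn f s μ) :
    2 * ⨍ x in s, max (-f x) 0 ∂μ ≤ ⨍ x in s, |f x - ⨍ y in s, |f y| ∂μ| ∂μ := by
  have : IsFiniteMeasure (μ.restrict s) := isFiniteMeasure_restrict.2 hs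
  have : NeZero (μ.restrict s) := ⟨by simpa using hs₀⟩
  simpa only [average_eq'] using two_mul_integral_negPart_le
    (hf.smul_measure (by simpa using hs₀))

end Averages

section Differentiation

variable {α : Type*} [PseudoMetricSpace α] [MeasurableSpace α] [BorelSpace α]
  [SecondCountableTopology α] (μ : Measure α) [IsLocallyFiniteMeasure μ]
  [IsUnifLocDoublingMeasure μ]

theorem ae_le_of_eventually_setAverage_closedBall_le {g : α → ℝ} (hg : LocallyIntegrable g μ)
    {s : Set α} {C : ℝ} (h : ∀ x ∈ s, ∀ᶠ ρ in 𝓝[>] 0, ⨍ y in closedBall x ρ, g y ∂μ ≤ C) :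
    ∀ᵐ x ∂μ, x ∈ s → g x ≤ C := by
  filter_upwards [IsUnifLocDoublingMeasure.ae_tendsto_average μ hg 1] with x hx hxs
  refine le_of_tendsto (hx (fun _ => x) id tendsto_id ?_) (h x hxs)
  filter_upwards [self_mem_nhdsWithin] with ρ hρ
  exact mem_closedBall_self (by simpa using hρ.le)

end Differentiation

section Haar

variable {E : Type*} [NormedAddCommGroup E] [NormedSpace ℝ E] [FiniteDimensional ℝ E]
  [MeasurableSpace E] [BorelSpace E] (μ : Measure E) [μ.IsAddHaarMeasure]

theorem restrict_closedBall_eq_restrict_ball (x : E) {r : ℝ} (hr : r ≠ 0) :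
    μ.restrict (closedBall x r) = μ.restrict (ball x r) :=
  Measure.restrict_congr_set <| ae_eq_set.2
    ⟨by rw [closedBall_sdiff_ball]; exact Measure.addHaar_sphere_of_ne_zero μ x hr,
      by rw [sdiff_eq_empty.2 ball_subset_closedBall, measure_empty]⟩

theorem ae_restrict_closedBall_le_of_forall_setAverage_le {g : E → ℝ} {x₀ : E} {r₀ : ℝ}
    (hr₀ : r₀ ≠ 0) (hg : IntegrableOn g (closedBall x₀ r₀) μ) {C : ℝ}
    (h : ∀ x ρ, 0 < ρ → closedBall x ρ ⊆ closedBall x₀ r₀ → ⨍ y in closedBall x ρ, g y ∂μ ≤ C) :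
    ∀ᵐ x ∂μ.restrict (closedBall x₀ r₀), g x ≤ C := by
  -- `G` is locally integrable and has the same averages as `g` over balls inside `closedBall x₀ r₀`.
  set G := (closedBall x₀ r₀).indicator g
  rw [restrict_closedBall_eq_restrict_ball μ x₀ hr₀, ae_restrict_iff' measurableSet_ball]
  have hG : ∀ x ∈ ball x₀ r₀, ∀ᶠ ρ in 𝓝[>] 0, ⨍ y in closedBall x ρ, G y ∂μ ≤ C := by
    intro x hx
    have hgap : 0 < r₀ - dist x x₀ := sub_pos.2 (mem_ball.1 hx)
    filter_upwards [Ioc_mem_nhdsGT hgap] with ρ ⟨hρ, hρr⟩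
    have hsub : closedBall x ρ ⊆ closedBall x₀ r₀ :=
      closedBall_subset_closedBall' (by linarith)
    rw [setAverage_congr_fun measurableSet_closedBall
      (Eventually.of_forall fun y hy => indicator_of_mem (hsub hy) g)]
    exact h x ρ hρ hsub
  filter_upwards [ae_le_of_eventually_setAverage_closedBall_le μ
    (hg.integrable_indicator measurableSet_closedBall).locallyIntegrable hG] with x hx hxb
  simpa [G, indicator_of_mem (ball_subset_closedBall hxb)] using hx hxb

end Haar

theorem cube_eq_closedBall (n : ℕ) (c : Fin n → ℝ) {r : ℝ} (hr : 0 ≤ r) :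
    cube n c r = closedBall c r := by
  ext y
  simp only [cube, mem_ofPred_eq, mem_closedBall, dist_pi_le_iff hr, Real.dist_eq]

theorem barL_implies_BMO_and_negPart_bounded (n : ℕ) (x0 : Fin n → ℝ) (r0 : ℝ) (hr0 : 0 < r0)
    (f : (Fin n → ℝ) → ℝ) (hf : IntegrableOn f (cube n x0 r0)) (N : ℝ)
    (hN : ∀ c r, 0 < r → cube n c r ⊆ cube n x0 r0 →
      ⨍ x in cube n c r, (abs (f x - ⨍ y in cube n c r, |f y|)) ≤ N) :
    (∀ c r, 0 < r → cube n c r ⊆ cube n x0 r0 →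
      ⨍ x in cube n c r, (abs (f x - ⨍ y in cube n c r, f y)) ≤ 2 * N) ∧
    (∀ᵐ x ∂(volume.restrict (cube n x0 r0)), max (-f x) 0 ≤ N / 2) := by
  have hball (c : Fin n → ℝ) {r : ℝ} (hr : 0 < r) :
      volume (closedBall c r) ≠ 0 ∧ volume (closedBall c r) ≠ ⊤ :=
    ⟨(measure_closedBall_pos volume c hr).ne', measure_closedBall_lt_top.ne⟩
  refine ⟨fun c r hr hsub => ?_, ?_⟩
  · have hNc := hN c r hr hsub
    rw [cube_eq_closedBall n c hr.le] at hsub hNc ⊢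
    have hBMO := setAverage_abs_sub_setAverage_le_two_mul (hball c hr).1 (hball c hr).2
      (hf.mono_set hsub) (⨍ y in closedBall c r, |f y|)
    linarith
  · rw [cube_eq_closedBall n x0 hr0.le] at hf hN ⊢
    refine ae_restrict_closedBall_le_of_forall_setAverage_le volume hr0.ne' hf.neg_part
      fun x ρ hρ hsub => ?_
    have hNx := hN x ρ hρ
    rw [cube_eq_closedBall n x hρ.le] at hNx
    have hneg := two_mul_setAverage_negPart_le (hball x hρ).1 (hball x hρ).2 (hf.mono_set hsub)
    linarith [hNx hsub]
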